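/- arXiv:0901.2290 — 2 statements merged into one kernel-verified Lean document; each statement's English description precedes it below -/
import Mathlib

section
/- Let ν : ℝ³ → ℝ be given by ν(v) = ∫_{ℝ³} |v-u|^γ μ(u) du with -3 < γ ≤ 1 and μ(u) = ρ(2πT)^{-3/2}exp(-|u-𝔲|²/(2T)), ρ, T > 0. Then there exist constants 0 < c ≤ C (depending on ρ, T, 𝔲, γ) such that c(1+|v|)^γ ≤ ν(v) ≤ C(1+|v|)^γ for all v ∈ ℝ³. -/
/-!
Write `μ u = G (u - 𝔲)` with `G` a centred Gaussian. The substitution `u = v - x` gives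
`ν v = ∫ ‖x‖ ^ γ * G (w - x) dx` with `w = v - 𝔲`, and by Peetre's inequality it suffices to
compare this with `(1 + ‖w‖) ^ γ`. Only continuity, positivity and polynomial decay
`G y ≤ K (1 + ‖y‖) ^ (-N)` of `G` matter.

Lower bound: there is a unit ball on which `w - x` stays in a fixed ball (so `G (w - x)` is bounded
below) and `‖x‖` is comparable to `1 + ‖w‖`.

Upper bound: for `γ ≥ 0` use `‖x‖ ≤ (1 + ‖w‖) (1 + ‖w - x‖)`. For `γ < 0` split at
`r = (1 + ‖w‖) / 2`: off `ball 0 r` we have `‖x‖ ^ γ ≤ r ^ γ`, and on it `G (w - x) ≤ K r ^ (-N)`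
while `∫ x in ball 0 r, ‖x‖ ^ γ` is a multiple of `r ^ (3 + γ)`.
-/

open MeasureTheory Real Metric Set Module
open scoped Nat

theorem pow_pred_mul_rpow {n : ℕ} (hn : n ≠ 0) {y : ℝ} (hy : 0 < y) (γ : ℝ) :
    y ^ (n - 1) * y ^ γ = y ^ ((n : ℝ) - 1 + γ) := by
  rw [rpow_add hy, ← rpow_natCast, Nat.cast_pred (Nat.pos_of_ne_zero hn)]

theorem exp_neg_sq_div_le {T : ℝ} (hT : 0 < T) (n : ℕ) {t : ℝ} (ht : 0 ≤ t) :
    exp (-t ^ 2 / (2 * T)) ≤ exp (T / 2 + 1) * n ! * (1 + t) ^ (-(n : ℝ)) := by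
  have hquad : exp (-t ^ 2 / (2 * T)) ≤ exp (T / 2 + 1) * exp (-(1 + t)) := by
    rw [← exp_add, exp_le_exp, div_le_iff₀ (by positivity)]
    nlinarith [sq_nonneg (t - T)]
  have hpoly : exp (-(1 + t)) ≤ n ! * (1 + t) ^ (-(n : ℝ)) := by
    rw [exp_neg, rpow_neg (by positivity), rpow_natCast, ← div_eq_mul_inv,
      ← inv_div]
    exact inv_anti₀ (by positivity) (pow_div_factorial_le_exp _ (by positivity) n)
  calc exp (-t ^ 2 / (2 * T)) ≤ exp (T / 2 + 1) * exp (-(1 + t)) := hquad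
    _ ≤ exp (T / 2 + 1) * (n ! * (1 + t) ^ (-(n : ℝ))) := by gcongr
    _ = _ := by ring

theorem min_rpow_mul_rpow_le {a b t x : ℝ} (ha : 0 < a) (ht : 0 < t) (hax : a * t ≤ x)
    (hxb : x ≤ b * t) (γ : ℝ) : min (a ^ γ) (b ^ γ) * t ^ γ ≤ x ^ γ := by
  rcases le_or_gt 0 γ with hγ | hγ
  · calc min (a ^ γ) (b ^ γ) * t ^ γ ≤ a ^ γ * t ^ γ := by gcongr; exact min_le_left _ _
      _ = (a * t) ^ γ := (mul_rpow ha.le ht.le).symm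
      _ ≤ x ^ γ := rpow_le_rpow (by positivity) hax hγ
  · have hb : 0 < b := pos_of_mul_pos_left ((mul_pos ha ht).trans_le (hax.trans hxb)) ht.le
    calc min (a ^ γ) (b ^ γ) * t ^ γ ≤ b ^ γ * t ^ γ := by gcongr; exact min_le_right _ _
      _ = (b * t) ^ γ := (mul_rpow hb.le ht.le).symm
      _ ≤ x ^ γ := rpow_le_rpow_of_nonpos ((mul_pos ha ht).trans_le hax) hxb hγ.le

section Weight

variable {E : Type*} [SeminormedAddCommGroup E]

theorem one_add_norm_le_mul (x y : E) : 1 + ‖x‖ ≤ (1 + ‖y‖) * (1 + ‖x - y‖) := by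
  nlinarith [norm_le_norm_add_norm_sub' x y, norm_nonneg y, norm_nonneg (x - y)]

/-- Peetre's inequality. -/
theorem one_add_norm_rpow_le_mul (x y : E) (γ : ℝ) :
    (1 + ‖x‖) ^ γ ≤ (1 + ‖y‖) ^ |γ| * (1 + ‖x - y‖) ^ γ := by
  rcases le_or_gt 0 γ with hγ | hγ
  · rw [abs_of_nonneg hγ, ← mul_rpow (by positivity) (by positivity)]
    exact rpow_le_rpow (by positivity) (one_add_norm_le_mul x y) hγ
  · have h := rpow_le_rpow (by positivity) (one_add_norm_le_mul (x - y) (-y)) (neg_nonneg.2 hγ.le)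
    rw [norm_neg, sub_neg_eq_add, sub_add_cancel, mul_rpow (by positivity) (by positivity)] at h
    have hinv : ∀ z : ℝ, 0 ≤ z → z ^ γ = (z ^ (-γ))⁻¹ := fun z hz ↦ by rw [rpow_neg hz, inv_inv]
    rw [abs_of_neg hγ, hinv _ (by positivity), hinv (1 + ‖x - y‖) (by positivity),
      ← div_eq_mul_inv, le_div_iff₀ (by positivity), inv_mul_le_iff₀ (by positivity), mul_comm]
    exact h

def ComparableToOneAddNormRpow (γ : ℝ) (f : E → ℝ) : Prop :=
  ∃ c C : ℝ, 0 < c ∧ c ≤ C ∧ ∀ v, c * (1 + ‖v‖) ^ γ ≤ f v ∧ f v ≤ C * (1 + ‖v‖) ^ γ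

theorem ComparableToOneAddNormRpow.comp_sub_const {γ : ℝ} {f : E → ℝ}
    (h : ComparableToOneAddNormRpow γ f) (a : E) :
    ComparableToOneAddNormRpow γ (fun v ↦ f (v - a)) := by
  obtain ⟨c, C, hc, hcC, hf⟩ := h
  set k := (1 + ‖a‖) ^ |γ|
  have hk : 1 ≤ k := one_le_rpow (by simp) (abs_nonneg γ)
  refine ⟨c / k, C * k, by positivity, ?_, fun v ↦ ⟨?_, ?_⟩⟩
  · calc c / k ≤ c := div_le_self hc.le hk
      _ ≤ C := hcC
      _ ≤ C * k := le_mul_of_one_le_right (hc.le.trans hcC) hk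
  · calc c / k * (1 + ‖v‖) ^ γ ≤ c / k * (k * (1 + ‖v - a‖) ^ γ) := by
          gcongr; exact one_add_norm_rpow_le_mul v a γ
      _ = c * (1 + ‖v - a‖) ^ γ := by field_simp
      _ ≤ f (v - a) := (hf _).1
  · calc f (v - a) ≤ C * (1 + ‖v - a‖) ^ γ := (hf _).2
      _ ≤ C * (k * (1 + ‖v‖) ^ γ) := by
          gcongr
          · exact hc.le.trans hcC
          · simpa [k] using one_add_norm_rpow_le_mul (v - a) (-a) γ
      _ = C * k * (1 + ‖v‖) ^ γ := by ring

end Weight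

theorem exists_closedBall_norm_comparable_one_add_norm {E : Type*} [NormedAddCommGroup E]
    [NormedSpace ℝ E] [Nontrivial E] (w : E) :
    ∃ p : E, ∀ x ∈ closedBall p 1,
      ‖w - x‖ ≤ 7 ∧ 3⁻¹ * (1 + ‖w‖) ≤ ‖x‖ ∧ ‖x‖ ≤ 5 * (1 + ‖w‖) := by
  by_cases hw : 2 ≤ ‖w‖
  · refine ⟨w, fun x hx ↦ ?_⟩
    rw [mem_closedBall_iff_norm'] at hx
    have h₁ := norm_sub_norm_le w (w - x)
    have h₂ := norm_sub_le w (w - x)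
    rw [sub_sub_cancel] at h₁ h₂
    refine ⟨by linarith, by linarith, by linarith⟩
  · obtain ⟨p, hp⟩ := exists_norm_eq E (show (0 : ℝ) ≤ 4 by norm_num)
    refine ⟨p, fun x hx ↦ ?_⟩
    rw [mem_closedBall_iff_norm] at hx
    have h₁ := norm_sub_norm_le p x
    rw [norm_sub_rev] at h₁
    have h₂ := norm_le_norm_add_norm_sub' x p
    have h₃ := norm_sub_le w x
    refine ⟨by linarith, by linarith, by linarith [norm_nonneg w]⟩

section Haar

variable {E : Type*} [NormedAddCommGroup E] [NormedSpace ℝ E] [FiniteDimensional ℝ E]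
  [MeasurableSpace E] [BorelSpace E] (μ : Measure E) [μ.IsAddHaarMeasure]

theorem integrableOn_ball_norm_rpow [Nontrivial E] {γ : ℝ} (hγ : -(finrank ℝ E : ℝ) < γ)
    (r : ℝ) : IntegrableOn (fun x : E ↦ ‖x‖ ^ γ) (ball 0 r) μ := by
  rw [integrableOn_fun_norm_addHaar μ (f := fun y ↦ y ^ γ)]
  rcases le_or_gt r 0 with hr | hr
  · simp [Ioo_eq_empty_of_le hr]
  refine ((intervalIntegral.integrableOn_Ioo_rpow_iff (s := (finrank ℝ E : ℝ) - 1 + γ) hr).2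
    (by linarith)).congr_fun (fun y hy ↦ ?_) measurableSet_Ioo
  rw [smul_eq_mul, pow_pred_mul_rpow finrank_pos.ne' hy.1]

theorem setIntegral_ball_norm_rpow [Nontrivial E] {γ r : ℝ} (hγ : -(finrank ℝ E : ℝ) < γ)
    (hr : 0 ≤ r) :
    ∫ x in ball (0 : E) r, ‖x‖ ^ γ ∂μ =
      finrank ℝ E * μ.real (ball 0 1) * (r ^ (finrank ℝ E + γ) / (finrank ℝ E + γ)) := by
  have hball : ∫ x in ball (0 : E) r, ‖x‖ ^ γ ∂μ = ∫ x, (Iio r).indicator (· ^ γ) ‖x‖ ∂μ := by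
    rw [← integral_indicator measurableSet_ball]
    congr 1 with x
    simp [indicator]
  have hradial : ∫ y in Ioi (0 : ℝ), y ^ (finrank ℝ E - 1) • (Iio r).indicator (· ^ γ) y =
      ∫ y in (0 : ℝ)..r, y ^ ((finrank ℝ E : ℝ) - 1 + γ) := by
    rw [intervalIntegral.integral_of_le hr, integral_Ioc_eq_integral_Ioo,
      ← Ioi_inter_Iio, ← setIntegral_indicator measurableSet_Iio]
    refine setIntegral_congr_fun measurableSet_Ioi fun y (hy : 0 < y) ↦ ?_
    by_cases hyr : y < r <;>
      simp [indicator, hyr, pow_pred_mul_rpow finrank_pos.ne' hy]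
  rw [hball, integral_fun_norm_addHaar, hradial, integral_rpow (by left; linarith),
    zero_rpow (by linarith)]
  simp only [nsmul_eq_mul, smul_eq_mul]
  ring_nf

end Haar

theorem integrable_and_integral_le_of_le {α : Type*} [MeasurableSpace α] {μ : Measure α}
    {f g : α → ℝ} (hf : AEStronglyMeasurable f μ) (hf0 : ∀ x, 0 ≤ f x) (hg : Integrable g μ)
    (hfg : ∀ x, f x ≤ g x) : Integrable f μ ∧ ∫ x, f x ∂μ ≤ ∫ x, g x ∂μ := by
  have hf_int : Integrable f μ :=
    hg.mono' hf (.of_forall fun x ↦ (norm_of_nonneg (hf0 x)).trans_le (hfg x))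
  exact ⟨hf_int, integral_mono hf_int hg hfg⟩

section Convolution

variable {E : Type*} [NormedAddCommGroup E] [NormedSpace ℝ E] [FiniteDimensional ℝ E]
  [MeasurableSpace E] [BorelSpace E] (μ : Measure E) [μ.IsAddHaarMeasure]
  {G : E → ℝ} {γ K N : ℝ}

theorem integrable_one_add_norm_rpow_mul_of_le {s : ℝ} (hG : Measurable G)
    (hG0 : ∀ x, 0 ≤ G x) (hdecay : ∀ x, G x ≤ K * (1 + ‖x‖) ^ (-N))
    (hs : s + finrank ℝ E < N) :
    Integrable (fun x ↦ (1 + ‖x‖) ^ s * G x) μ := by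
  refine ((integrable_one_add_norm (r := N - s) (by linarith)).const_mul K).mono'
    (by fun_prop) (.of_forall fun x ↦ ?_)
  have hx : 0 < 1 + ‖x‖ := by positivity
  rw [norm_of_nonneg (mul_nonneg (by positivity) (hG0 x))]
  calc (1 + ‖x‖) ^ s * G x ≤ (1 + ‖x‖) ^ s * (K * (1 + ‖x‖) ^ (-N)) := by gcongr; exact hdecay x
    _ = K * (1 + ‖x‖) ^ (-(N - s)) := by
        rw [neg_sub, rpow_sub hx, rpow_neg hx.le]; ring

theorem integral_norm_rpow_mul_sub_le_of_nonneg (hγ : 0 ≤ γ) (hγN : γ + finrank ℝ E < N)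
    (hG : Measurable G) (hG0 : ∀ x, 0 ≤ G x) (hdecay : ∀ x, G x ≤ K * (1 + ‖x‖) ^ (-N))
    (w : E) :
    Integrable (fun x ↦ ‖x‖ ^ γ * G (w - x)) μ ∧
      ∫ x, ‖x‖ ^ γ * G (w - x) ∂μ ≤ (∫ y, (1 + ‖y‖) ^ γ * G y ∂μ) * (1 + ‖w‖) ^ γ := by
  have hmaj : Integrable (fun x ↦ (1 + ‖w‖) ^ γ * ((1 + ‖w - x‖) ^ γ * G (w - x))) μ :=
    ((integrable_one_add_norm_rpow_mul_of_le μ hG hG0 hdecay hγN).comp_sub_left w).const_mul _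
  have hle : ∀ x, ‖x‖ ^ γ * G (w - x) ≤ (1 + ‖w‖) ^ γ * ((1 + ‖w - x‖) ^ γ * G (w - x)) := by
    intro x
    have hx : ‖x‖ ≤ (1 + ‖w‖) * (1 + ‖w - x‖) := by
      rw [norm_sub_rev]
      exact (le_add_of_nonneg_left zero_le_one).trans (one_add_norm_le_mul x w)
    rw [← mul_assoc, ← mul_rpow (by positivity) (by positivity)]
    gcongr
    exact hG0 _
  refine (integrable_and_integral_le_of_le (by fun_prop)
    (fun x ↦ mul_nonneg (by positivity) (hG0 _)) hmaj hle).imp_right (·.trans_eq ?_)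
  rw [integral_const_mul, integral_sub_left_eq_self (fun y ↦ (1 + ‖y‖) ^ γ * G y), mul_comm]

/-- On `ball 0 r` the point `w - x` lies outside `ball 0 (r - 1)`, where `G ≤ K r ^ (-N)`. -/
theorem integral_norm_rpow_mul_sub_le_of_neg [Nontrivial E] (hγ : -(finrank ℝ E : ℝ) < γ)
    (hγ0 : γ < 0) (hN : finrank ℝ E < N) (hG : Measurable G) (hG0 : ∀ x, 0 ≤ G x)
    (hdecay : ∀ x, G x ≤ K * (1 + ‖x‖) ^ (-N)) {w : E} {r : ℝ} (hr : 0 < r)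
    (hrw : 2 * r ≤ 1 + ‖w‖) :
    Integrable (fun x ↦ ‖x‖ ^ γ * G (w - x)) μ ∧
      ∫ x, ‖x‖ ^ γ * G (w - x) ∂μ ≤
        K * r ^ (-N) * ∫ x in ball (0 : E) r, ‖x‖ ^ γ ∂μ + r ^ γ * ∫ y, G y ∂μ := by
  have hK : 0 ≤ K := by simpa using (hG0 0).trans (hdecay 0)
  have hGint : Integrable G μ := by
    simpa using integrable_one_add_norm_rpow_mul_of_le μ (s := 0) hG hG0 hdecay (by simpa)
  set near := (ball (0 : E) r).indicator fun x ↦ K * r ^ (-N) * ‖x‖ ^ γ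
  have hnear : Integrable near μ :=
    IntegrableOn.integrable_indicator ((integrableOn_ball_norm_rpow μ hγ r).const_mul _)
      measurableSet_ball
  have hfar : Integrable (fun x ↦ r ^ γ * G (w - x)) μ := (hGint.comp_sub_left w).const_mul _
  have hle : ∀ x, ‖x‖ ^ γ * G (w - x) ≤ near x + r ^ γ * G (w - x) := by
    intro x
    by_cases hx : x ∈ ball (0 : E) r
    · have hGx : G (w - x) ≤ K * r ^ (-N) := by
        have hrx : r ≤ 1 + ‖w - x‖ := by
          rw [mem_ball_zero_iff] at hx
          linarith [norm_le_norm_add_norm_sub' w x]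
        calc G (w - x) ≤ K * (1 + ‖w - x‖) ^ (-N) := hdecay _
          _ ≤ K * r ^ (-N) := mul_le_mul_of_nonneg_left
              (rpow_le_rpow_of_nonpos hr hrx (by linarith [(finrank ℝ E).cast_nonneg (α := ℝ)])) hK
      calc ‖x‖ ^ γ * G (w - x) ≤ ‖x‖ ^ γ * (K * r ^ (-N)) := by gcongr
        _ = near x := by simp only [near, indicator_of_mem hx]; ring
        _ ≤ near x + r ^ γ * G (w - x) :=
            le_add_of_nonneg_right (by have := hG0 (w - x); positivity)
    · rw [mem_ball_zero_iff, not_lt] at hx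
      simp only [near, indicator_of_notMem (by simpa using hx : x ∉ ball (0 : E) r), zero_add]
      exact mul_le_mul_of_nonneg_right (rpow_le_rpow_of_nonpos hr hx hγ0.le) (hG0 _)
  refine (integrable_and_integral_le_of_le (by fun_prop)
    (fun x ↦ mul_nonneg (by positivity) (hG0 _)) (hnear.add hfar) hle).imp_right (·.trans_eq ?_)
  rw [Pi.add_def, integral_add hnear hfar, integral_indicator measurableSet_ball,
    integral_const_mul, integral_const_mul, integral_sub_left_eq_self G]

theorem exists_integral_norm_rpow_mul_sub_le [Nontrivial E] (hγ : -(finrank ℝ E : ℝ) < γ)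
    (hγN : γ + finrank ℝ E < N) (hN : finrank ℝ E < N) (hG : Measurable G)
    (hG0 : ∀ x, 0 ≤ G x) (hdecay : ∀ x, G x ≤ K * (1 + ‖x‖) ^ (-N)) :
    ∃ C, ∀ w, Integrable (fun x ↦ ‖x‖ ^ γ * G (w - x)) μ ∧
      ∫ x, ‖x‖ ^ γ * G (w - x) ∂μ ≤ C * (1 + ‖w‖) ^ γ := by
  rcases le_or_gt 0 γ with hγ0 | hγ0
  · exact ⟨_, integral_norm_rpow_mul_sub_le_of_nonneg μ hγ0 hγN hG hG0 hdecay⟩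
  have hK : 0 ≤ K := by simpa using (hG0 0).trans (hdecay 0)
  set d : ℝ := (finrank ℝ E : ℝ)
  set B := d * μ.real (ball 0 1) / (d + γ)
  have hB : 0 ≤ B := div_nonneg (by positivity) (by linarith)
  refine ⟨(K * B * 2⁻¹ ^ (d - N) + ∫ y, G y ∂μ) * 2⁻¹ ^ γ, fun w ↦ ?_⟩
  set r := 2⁻¹ * (1 + ‖w‖)
  have hr : 2⁻¹ ≤ r := le_mul_of_one_le_right (by norm_num) (by simp)
  obtain ⟨hint, hle⟩ := integral_norm_rpow_mul_sub_le_of_neg μ hγ hγ0 hN hG hG0 hdecay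
    (w := w) (r := r) (by positivity) (by simp [r])
  refine ⟨hint, hle.trans ?_⟩
  have hr0 : 0 < r := by positivity
  have hpow : r ^ (-N) * r ^ (d + γ) = r ^ (d - N) * r ^ γ := by
    rw [← rpow_add hr0, ← rpow_add hr0]; ring_nf
  have hsmall : r ^ (d - N) ≤ 2⁻¹ ^ (d - N) := rpow_le_rpow_of_nonpos (by norm_num) hr (by linarith)
  have hscale : r ^ γ = 2⁻¹ ^ γ * (1 + ‖w‖) ^ γ := mul_rpow (by norm_num) (by positivity)
  rw [setIntegral_ball_norm_rpow μ hγ hr0.le]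
  calc K * r ^ (-N) * (d * μ.real (ball 0 1) * (r ^ (d + γ) / (d + γ))) + r ^ γ * ∫ y, G y ∂μ
      = K * B * (r ^ (-N) * r ^ (d + γ)) + r ^ γ * ∫ y, G y ∂μ := by simp only [B]; ring
    _ = (K * B * r ^ (d - N) + ∫ y, G y ∂μ) * r ^ γ := by rw [hpow]; ring
    _ ≤ (K * B * 2⁻¹ ^ (d - N) + ∫ y, G y ∂μ) * r ^ γ := by gcongr
    _ = _ := by rw [hscale]; ring

theorem exists_mul_le_integral_norm_rpow_mul_sub [Nontrivial E] (hG : Continuous G)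
    (hGpos : ∀ x, 0 < G x) (hint : ∀ w, Integrable (fun x ↦ ‖x‖ ^ γ * G (w - x)) μ) :
    ∃ c, 0 < c ∧ ∀ w, c * (1 + ‖w‖) ^ γ ≤ ∫ x, ‖x‖ ^ γ * G (w - x) ∂μ := by
  obtain ⟨x₀, -, hx₀⟩ := (isCompact_closedBall (0 : E) 7).exists_isMinOn
    (nonempty_closedBall.2 (by norm_num)) hG.continuousOn
  set m : ℝ := min (3⁻¹ ^ γ) (5 ^ γ)
  have hm : 0 < m := lt_min (by positivity) (by positivity)
  have hball : 0 < μ.real (closedBall (0 : E) 1) :=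
    ENNReal.toReal_pos (measure_closedBall_pos μ _ one_pos).ne' measure_closedBall_lt_top.ne
  refine ⟨μ.real (closedBall 0 1) * (m * G x₀), by have := hGpos x₀; positivity, fun w ↦ ?_⟩
  obtain ⟨p, hp⟩ := exists_closedBall_norm_comparable_one_add_norm w
  have hle : ∀ x ∈ closedBall p 1, m * (1 + ‖w‖) ^ γ * G x₀ ≤ ‖x‖ ^ γ * G (w - x) := by
    intro x hx
    obtain ⟨hwx, hlow, hup⟩ := hp x hx
    exact mul_le_mul (min_rpow_mul_rpow_le (by norm_num) (by positivity) hlow hup γ)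
      (hx₀ (mem_closedBall_zero_iff.2 hwx)) (hGpos x₀).le (by positivity)
  calc μ.real (closedBall 0 1) * (m * G x₀) * (1 + ‖w‖) ^ γ
      = ∫ _ in closedBall p 1, m * (1 + ‖w‖) ^ γ * G x₀ ∂μ := by
        rw [setIntegral_const, smul_eq_mul, Measure.real, Measure.real,
          Measure.addHaar_closedBall_center μ p]
        ring
    _ ≤ ∫ x in closedBall p 1, ‖x‖ ^ γ * G (w - x) ∂μ :=
        setIntegral_mono_on (integrableOn_const measure_closedBall_lt_top.ne)
          (hint w).integrableOn measurableSet_closedBall hle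
    _ ≤ ∫ x, ‖x‖ ^ γ * G (w - x) ∂μ := setIntegral_le_integral (hint w)
        (.of_forall fun x ↦ mul_nonneg (by positivity) (hGpos _).le)

theorem comparableToOneAddNormRpow_integral_norm_rpow_mul_sub [Nontrivial E]
    (hγ : -(finrank ℝ E : ℝ) < γ) (hγN : γ + finrank ℝ E < N) (hN : finrank ℝ E < N)
    (hG : Continuous G) (hGpos : ∀ x, 0 < G x) (hdecay : ∀ x, G x ≤ K * (1 + ‖x‖) ^ (-N)) :
    ComparableToOneAddNormRpow γ (fun w ↦ ∫ x, ‖x‖ ^ γ * G (w - x) ∂μ) := by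
  obtain ⟨C, hC⟩ := exists_integral_norm_rpow_mul_sub_le μ hγ hγN hN hG.measurable
    (fun x ↦ (hGpos x).le) hdecay
  obtain ⟨c, hc, hcle⟩ := exists_mul_le_integral_norm_rpow_mul_sub μ hG hGpos fun w ↦ (hC w).1
  refine ⟨c, C, hc, ?_, fun w ↦ ⟨hcle w, (hC w).2⟩⟩
  simpa using (hcle 0).trans (hC 0).2

theorem comparableToOneAddNormRpow_integral_norm_sub_rpow_mul [Nontrivial E]
    (hγ : -(finrank ℝ E : ℝ) < γ) (hγN : γ + finrank ℝ E < N) (hN : finrank ℝ E < N)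
    (hG : Continuous G) (hGpos : ∀ x, 0 < G x) (hdecay : ∀ x, G x ≤ K * (1 + ‖x‖) ^ (-N))
    (a : E) : ComparableToOneAddNormRpow γ (fun v ↦ ∫ u, ‖v - u‖ ^ γ * G (u - a) ∂μ) := by
  convert (comparableToOneAddNormRpow_integral_norm_rpow_mul_sub μ hγ hγN hN hG hGpos
    hdecay).comp_sub_const a using 2 with v
  rw [← integral_sub_left_eq_self _ μ v]
  simp only [sub_sub_cancel, sub_right_comm]

end Convolution

theorem collision_frequency_asymptotics (γ ρ T : ℝ) (𝔲 : EuclideanSpace ℝ (Fin 3))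
    (hγ1 : -3 < γ) (hγ2 : γ ≤ 1) (hρ : 0 < ρ) (hT : 0 < T)
    (μ ν : EuclideanSpace ℝ (Fin 3) → ℝ)
    (hμ : ∀ u, μ u = ρ * (2 * π * T) ^ (-(3 : ℝ) / 2) * Real.exp (-‖u - 𝔲‖ ^ 2 / (2 * T)))
    (hν : ∀ v, ν v = ∫ u, ‖v - u‖ ^ γ * μ u) :
    ∃ c C : ℝ, 0 < c ∧ c ≤ C ∧
      ∀ v, c * (1 + ‖v‖) ^ γ ≤ ν v ∧ ν v ≤ C * (1 + ‖v‖) ^ γ := by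
  set a := ρ * (2 * π * T) ^ (-(3 : ℝ) / 2)
  have ha : 0 < a := by positivity
  have hdim : (finrank ℝ (EuclideanSpace ℝ (Fin 3)) : ℝ) = 3 := by simp
  have hdecay (y : EuclideanSpace ℝ (Fin 3)) : a * exp (-‖y‖ ^ 2 / (2 * T)) ≤
      a * (exp (T / 2 + 1) * 5 !) * (1 + ‖y‖) ^ (-((5 : ℕ) : ℝ)) :=
    (mul_le_mul_of_nonneg_left (exp_neg_sq_div_le hT 5 (norm_nonneg y)) ha.le).trans_eq
      (by ring)
  obtain rfl : ν = fun v ↦ ∫ u, ‖v - u‖ ^ γ * (a * exp (-‖u - 𝔲‖ ^ 2 / (2 * T))) :=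
    funext fun v ↦ by simp_rw [hν, hμ]
  exact comparableToOneAddNormRpow_integral_norm_sub_rpow_mul volume
    (by rw [hdim]; linarith) (by rw [hdim]; push_cast; linarith) (by rw [hdim]; norm_num)
    (by fun_prop) (fun y ↦ by positivity) hdecay 𝔲
end

section
/- Let l : ℝ³×ℝ³ → ℝ satisfy |l(v,v')| ≤ C exp(-c|v-v'|²) / (|v-v'| (1+|v|+|v'|)^{1-γ}) with c > 0, C > 0 and -3 < γ ≤ 1. Then there is a constant C' such that ∫_{ℝ³} |l(v,v')| dv' ≤ C' (1+|v|)^{γ-1} for all v ∈ ℝ³; in particular ∫ |l(v,v')| dv' ≤ C'' (1+|v|)^γ. -/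
open MeasureTheory Real Module

/-!
The weight `(1 + |v| + |v'|)^(γ-1)` is at most `(1 + |v|)^(γ-1)` since `γ ≤ 1`, so `|l(v, ·)|` is
dominated by `C (1 + |v|)^(γ-1)` times a translate of `w ↦ exp(-c|w|²)/|w|`. In polar coordinates
this function has radial density `r² · exp(-cr²)/r = r exp(-cr²)`, so it is integrable on `ℝ³`,
and its integral is a constant `K` independent of `v`.
-/

lemma integrable_exp_neg_mul_sq_div_norm {E : Type*} [NormedAddCommGroup E] [NormedSpace ℝ E]
    [FiniteDimensional ℝ E] [MeasurableSpace E] [BorelSpace E] (μ : Measure E)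
    [μ.IsAddHaarMeasure] {c : ℝ} (hc : 0 < c) (hdim : 2 ≤ finrank ℝ E) :
    Integrable (fun x : E => exp (-c * ‖x‖ ^ 2) / ‖x‖) μ := by
  have : Nontrivial E := nontrivial_of_finrank_pos (R := ℝ) (by omega)
  rw [integrable_fun_norm_addHaar μ (f := fun r => exp (-c * r ^ 2) / r)]
  have hs : (-1 : ℝ) < (finrank ℝ E : ℝ) - 2 := by
    have : (2 : ℝ) ≤ finrank ℝ E := by exact_mod_cast hdim
    linarith
  refine (integrableOn_rpow_mul_exp_neg_mul_sq hc hs).congr_fun (fun r (hr : 0 < r) => ?_)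
    measurableSet_Ioi
  have hpow : r ^ ((finrank ℝ E : ℝ) - 2) * r = r ^ (finrank ℝ E - 1) := by
    rw [← rpow_natCast, ← rpow_add_one hr.ne', Nat.cast_sub (by omega)]
    congr 1
    push_cast
    ring
  rw [smul_eq_mul, ← hpow]
  field_simp

lemma integral_abs_le_mul_integral_of_abs_le_comp_sub {G : Type*} [AddCommGroup G]
    [MeasurableSpace G] [MeasurableAdd G] [MeasurableNeg G] (μ : Measure G)
    [μ.IsAddLeftInvariant] [μ.IsNegInvariant] {f g : G → ℝ} {A : ℝ} (v : G)
    (hg : Integrable g μ) (hf : ∀ x, |f x| ≤ A * g (v - x)) :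
    ∫ x, |f x| ∂μ ≤ A * ∫ w, g w ∂μ := by
  calc ∫ x, |f x| ∂μ ≤ ∫ x, A * g (v - x) ∂μ :=
        integral_mono_of_nonneg (.of_forall fun x => abs_nonneg _)
          ((hg.comp_sub_left v).const_mul A) (.of_forall hf)
    _ = A * ∫ w, g w ∂μ := by rw [integral_const_mul, integral_sub_left_eq_self g μ v]

lemma div_mul_rpow_le_rpow_neg_mul_div {x r a b p : ℝ} (hx : 0 ≤ x) (hr : 0 ≤ r) (ha : 0 < a)
    (hab : a ≤ b) (hp : 0 ≤ p) : x / (r * b ^ p) ≤ a ^ (-p) * (x / r) := by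
  rw [← div_div, rpow_neg ha.le, ← div_eq_inv_mul]
  exact div_le_div_of_nonneg_left (by positivity) (by positivity) (rpow_le_rpow ha.le hab hp)

theorem kernel_integral_decay_general (γ c C : ℝ) (hγ2 : γ ≤ 1)
    (hc : 0 < c) (hC : 0 < C)
    (l : EuclideanSpace ℝ (Fin 3) → EuclideanSpace ℝ (Fin 3) → ℝ)
    (hl : ∀ v v', |l v v'| ≤
      C * Real.exp (-c * ‖v - v'‖ ^ 2) / (‖v - v'‖ * (1 + ‖v‖ + ‖v'‖) ^ (1 - γ))) :
    ∃ C' > (0 : ℝ), (∀ v, (∫ v', |l v v'|) ≤ C' * (1 + ‖v‖) ^ (γ - 1)) ∧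
      ∃ C'' > (0 : ℝ), ∀ v, (∫ v', |l v v'|) ≤ C'' * (1 + ‖v‖) ^ γ := by
  set K := ∫ w : EuclideanSpace ℝ (Fin 3), exp (-c * ‖w‖ ^ 2) / ‖w‖
  have hK : 0 ≤ K := integral_nonneg fun w => by positivity
  have hdecay (v) : ∫ v', |l v v'| ≤ (C * K + 1) * (1 + ‖v‖) ^ (γ - 1) := by
    have hpoint (v') : |l v v'| ≤ C * (1 + ‖v‖) ^ (γ - 1) * (exp (-c * ‖v - v'‖ ^ 2) / ‖v - v'‖) :=
      calc |l v v'| ≤ _ := hl v v'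
        _ ≤ (1 + ‖v‖) ^ (-(1 - γ)) * (C * exp (-c * ‖v - v'‖ ^ 2) / ‖v - v'‖) :=
          div_mul_rpow_le_rpow_neg_mul_div (by positivity) (norm_nonneg _) (by positivity)
            (by linarith [norm_nonneg v']) (by linarith)
        _ = _ := by rw [neg_sub, mul_div_assoc]; ring
    calc ∫ v', |l v v'| ≤ C * (1 + ‖v‖) ^ (γ - 1) * K :=
          integral_abs_le_mul_integral_of_abs_le_comp_sub volume v
            (integrable_exp_neg_mul_sq_div_norm volume hc (by simp)) hpoint
      _ ≤ (C * K + 1) * (1 + ‖v‖) ^ (γ - 1) := by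
          nlinarith [rpow_nonneg (by positivity : (0 : ℝ) ≤ 1 + ‖v‖) (γ - 1)]
  refine ⟨C * K + 1, by positivity, hdecay, C * K + 1, by positivity, fun v => ?_⟩
  calc ∫ v', |l v v'| ≤ (C * K + 1) * (1 + ‖v‖) ^ (γ - 1) := hdecay v
    _ ≤ (C * K + 1) * (1 + ‖v‖) ^ γ := by
      gcongr
      · linarith [norm_nonneg v]
      · linarith

theorem kernel_integral_decay (γ c C : ℝ) (hγ1 : -3 < γ) (hγ2 : γ ≤ 1)
    (hc : 0 < c) (hC : 0 < C)
    (l : EuclideanSpace ℝ (Fin 3) → EuclideanSpace ℝ (Fin 3) → ℝ)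
    (hl : ∀ v v', |l v v'| ≤
      C * Real.exp (-c * ‖v - v'‖ ^ 2) / (‖v - v'‖ * (1 + ‖v‖ + ‖v'‖) ^ (1 - γ))) :
    ∃ C' > (0 : ℝ), (∀ v, (∫ v', |l v v'|) ≤ C' * (1 + ‖v‖) ^ (γ - 1)) ∧
      ∃ C'' > (0 : ℝ), ∀ v, (∫ v', |l v v'|) ≤ C'' * (1 + ‖v‖) ^ γ :=
  kernel_integral_decay_general γ c C hγ2 hc hC l hl
end
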